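/- For n ≥ 1, 0 < s < 1, the function E^{(s)}(x,y) = (Γ((n−2s)/2)/(4π^{n/2+1−s})) (|x|²+y²)^{−(n−2s)/2} satisfies, for every (x,y) ∈ ℝ^n × (0,∞) with (x,y) ≠ (0,0), the equation ∂²_y E^{(s)} + ((1−2s)/y) ∂_y E^{(s)} + Δ_x E^{(s)} = 0. -/

import Mathlib

/-! With `r = |x|² + y²` and `E = C r^p`, `p = -(n - 2s)/2`, each pure second derivative
`∂²_ξ E` is `2pC (r^(p-1) + 2(p-1) ξ² r^(p-2))` and `∂_y E = 2pC y r^(p-1)`.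
Summing, the `r^(p-2)` terms recombine into `2(p-1) r^(p-1)`, so the left-hand side is
`2pC r^(p-1) (n + 2 - 2s + 2(p-1)) = 2pC r^(p-1) (n - 2s + 2p) = 0`. -/

open Real MeasureTheory Set

/-- The coordinate Laplacian on `ℝ^n`. -/
noncomputable def lapl (n : ℕ) (f : EuclideanSpace ℝ (Fin n) → ℝ)
    (x : EuclideanSpace ℝ (Fin n)) : ℝ :=
  ∑ i : Fin n,
    fderiv ℝ (fun z => fderiv ℝ f z (EuclideanSpace.single i (1:ℝ))) x
      (EuclideanSpace.single i (1:ℝ))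

/-- The fundamental solution `E^{(s)}(x,y)` in closed form. -/
noncomputable def Efun (n : ℕ) (s : ℝ) (x : EuclideanSpace ℝ (Fin n)) (y : ℝ) : ℝ :=
  Real.Gamma (((n:ℝ) - 2*s)/2) / (4 * π ^ ((n:ℝ)/2 + 1 - s))
    * (‖x‖^2 + y^2) ^ (-(((n:ℝ) - 2*s)/2))

section Radial

variable (c p : ℝ)

theorem hasDerivAt_add_sq_rpow {t : ℝ} (h : c + t ^ 2 ≠ 0) :
    HasDerivAt (fun t => (c + t ^ 2) ^ p) (2 * p * t * (c + t ^ 2) ^ (p - 1)) t := by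
  have hsq : HasDerivAt (fun t : ℝ => c + t ^ 2) (2 * t) t := by
    simpa using (hasDerivAt_pow 2 t).const_add c
  exact (hsq.rpow_const (Or.inl h)).congr_deriv (by ring)

theorem deriv_deriv_const_mul_add_sq_rpow (C : ℝ) {t : ℝ} (h : c + t ^ 2 ≠ 0) :
    deriv (deriv fun t => C * (c + t ^ 2) ^ p) t
      = 2 * p * C * ((c + t ^ 2) ^ (p - 1) + 2 * (p - 1) * t ^ 2 * (c + t ^ 2) ^ (p - 2)) := by
  have hderiv : deriv (fun t => C * (c + t ^ 2) ^ p)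
      =ᶠ[nhds t] fun t => 2 * p * C * (t * (c + t ^ 2) ^ (p - 1)) := by
    have hcont : ContinuousAt (fun t : ℝ => c + t ^ 2) t := by fun_prop
    filter_upwards [hcont.eventually_ne h] with u hu
    rw [((hasDerivAt_add_sq_rpow c p hu).const_mul C).deriv]
    ring
  rw [hderiv.deriv_eq]
  refine (((hasDerivAt_id' t).mul (hasDerivAt_add_sq_rpow c (p - 1) h)).const_mul _).deriv.trans ?_
  rw [show p - 1 - 1 = p - 2 by ring]
  ring

theorem hasFDerivAt_norm_sq_add_rpow {E : Type*} [NormedAddCommGroup E]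
    [InnerProductSpace ℝ E] {z : E} (h : ‖z‖ ^ 2 + c ≠ 0) :
    HasFDerivAt (fun z => (‖z‖ ^ 2 + c) ^ p)
      ((2 * p * (‖z‖ ^ 2 + c) ^ (p - 1)) • innerSL ℝ z) z := by
  have hsq : HasFDerivAt (fun z : E => ‖z‖ ^ 2 + c) ((2 : ℝ) • innerSL ℝ z) z := by
    simpa [two_smul] using (hasStrictFDerivAt_norm_sq z).hasFDerivAt.add_const c
  convert hsq.rpow_const (p := p) (Or.inl h) using 1
  rw [smul_smul]
  ring_nf

variable {n : ℕ} (C : ℝ)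

theorem fderiv_const_mul_norm_sq_add_rpow_single (hc : 0 < c) (z : EuclideanSpace ℝ (Fin n))
    (i : Fin n) :
    fderiv ℝ (fun z => C * (‖z‖ ^ 2 + c) ^ p) z (EuclideanSpace.single i 1)
      = 2 * p * C * ((‖z‖ ^ 2 + c) ^ (p - 1) * z i) := by
  rw [((hasFDerivAt_norm_sq_add_rpow c p (by positivity)).const_mul C).fderiv]
  simp only [smul_apply, coe_innerSL_apply, EuclideanSpace.inner_single_right, ringHom_apply,
    one_mul, smul_eq_mul]
  ring

theorem lapl_const_mul_norm_sq_add_rpow (hc : 0 < c) (x : EuclideanSpace ℝ (Fin n)) :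
    lapl n (fun z => C * (‖z‖ ^ 2 + c) ^ p) x
      = 2 * p * C * (n * (‖x‖ ^ 2 + c) ^ (p - 1)
          + 2 * (p - 1) * ‖x‖ ^ 2 * (‖x‖ ^ 2 + c) ^ (p - 2)) := by
  have hsecond : ∀ i : Fin n,
      fderiv ℝ (fun z => 2 * p * C * ((‖z‖ ^ 2 + c) ^ (p - 1) * z i)) x
        (EuclideanSpace.single i 1)
      = 2 * p * C * (‖x‖ ^ 2 + c) ^ (p - 1)
          + 2 * p * C * (2 * (p - 1) * (‖x‖ ^ 2 + c) ^ (p - 2)) * (x i * x i) := by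
    intro i
    have hpow := hasFDerivAt_norm_sq_add_rpow c (p - 1) (z := x) (by positivity)
    have hproj : HasFDerivAt (fun z : EuclideanSpace ℝ (Fin n) => z i)
        (EuclideanSpace.proj (𝕜 := ℝ) i) x :=
      (EuclideanSpace.proj (𝕜 := ℝ) i).hasFDerivAt
    rw [HasFDerivAt.fderiv
      (f := fun z : EuclideanSpace ℝ (Fin n) => 2 * p * C * ((‖z‖ ^ 2 + c) ^ (p - 1) * z i))
      ((hpow.mul hproj).const_mul _)]
    simp only [show p - 1 - 1 = p - 2 by ring, smul_add, add_apply, smul_apply, PiLp.proj_apply,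
      PiLp.single_eq_same, smul_eq_mul, mul_one, coe_innerSL_apply,
      EuclideanSpace.inner_single_right, ringHom_apply, one_mul]
    ring
  have hnorm : ∑ i : Fin n, x i * x i = ‖x‖ ^ 2 := by
    simp [EuclideanSpace.norm_eq, ← sq, Real.sq_sqrt (Finset.sum_nonneg fun i _ => sq_nonneg _)]
  simp only [lapl, fderiv_const_mul_norm_sq_add_rpow_single c p C hc, hsecond,
    Finset.sum_add_distrib, Finset.sum_const, Finset.card_univ, Fintype.card_fin, nsmul_eq_mul,
    ← Finset.mul_sum, hnorm]
  ring

end Radial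

theorem stmt_15_general (n : ℕ) (s : ℝ)
    (x : EuclideanSpace ℝ (Fin n)) (y : ℝ) (hy : 0 < y) :
    deriv (deriv (fun y' => Efun n s x y')) y
      + ((1 - 2*s)/y) * deriv (fun y' => Efun n s x y') y
      + lapl n (fun x' => Efun n s x' y) x = 0 := by
  set C := Real.Gamma (((n:ℝ) - 2*s)/2) / (4 * π ^ ((n:ℝ)/2 + 1 - s))
  set p := -(((n:ℝ) - 2*s)/2) with hp
  set r := ‖x‖ ^ 2 + y ^ 2 with hr
  have hr0 : 0 < r := by positivity
  have hyy := deriv_deriv_const_mul_add_sq_rpow (‖x‖ ^ 2) p C hr0.ne'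
  have hy1 := ((hasDerivAt_add_sq_rpow (‖x‖ ^ 2) p hr0.ne').const_mul C).deriv
  have hxx := lapl_const_mul_norm_sq_add_rpow (y ^ 2) p C (by positivity) x
  simp only [Efun]
  rw [hyy, hy1, hxx, ← hr, show r ^ (p - 2) = r ^ (p - 1) / r by
    rw [show p - 2 = p - 1 - 1 by ring, Real.rpow_sub_one hr0.ne']]
  field_simp
  rw [hr, hp]
  ring

theorem stmt_15 (n : ℕ) (hn : 1 ≤ n) (s : ℝ) (hs0 : 0 < s) (hs1 : s < 1)
    (x : EuclideanSpace ℝ (Fin n)) (y : ℝ) (hy : 0 < y) (hxy : ¬(x = 0 ∧ y = 0)) :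
    deriv (deriv (fun y' => Efun n s x y')) y
      + ((1 - 2*s)/y) * deriv (fun y' => Efun n s x y') y
      + lapl n (fun x' => Efun n s x' y) x = 0 :=
  stmt_15_general n s x y hy
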